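/- For every s, v ∈ V with v ≠ s: Δ'_{s•}(v) = Σ_{w : v ∈ P'_s(w) and w ∈ T(s)} (σ'_{sv}/σ'_{sw}) · (1 + Δ'_{s•}(w)) + Σ_{w : v ∈ P'_s(w) and w ∉ T(s)} (σ'_{sv}/σ'_{sw}) · Δ'_{s•}(w). -/

import Mathlib

/-!
Brandes's argument, run in `G'` for the target set `T(s)`. Because cycles have positive weight, no
walk from `s` to `t` is shorter than `d(s,t)`, so a shortest path splits at any of its vertices `y`
into a shortest `s`-`y` path and a shortest continuation, and any such pair splices back. Hence the
shortest `s`-`t` paths through `w` number `σ_sw` times the continuations from `w`, and those using an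
edge `(x,w)` with `x ∈ P_s(w)` number `σ_sx` times the same continuations; as a shortest path through
`x ≠ t` leaves `x` along exactly one such edge,
`σ_st(x)/σ_st = Σ_{x ∈ P_s(w)} (σ_sx/σ_sw) · σ_st(w)/σ_st`.
Summing over `t ∈ T(s) \ {x}` and comparing the inner sum with `Δ'_{s•}(w)`, the term `t = x`
vanishes (`w` is farther from `s` than `x`) and the term `t = w` contributes `1` exactly when
`w ∈ T(s)`.
-/

open scoped BigOperators

/-- A directed graph on vertex set `V` with positive real edge weights. -/
structure WDigraph (V : Type*) where
  /-- the edge relation -/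
  E : V → V → Prop
  /-- the edge weights -/
  w : V → V → ℝ
  /-- weights of edges are positive -/
  pos : ∀ a b, E a b → 0 < w a b

namespace WDigraph

variable {V : Type*} [Fintype V] [DecidableEq V]

/-- `p` is a simple path from `s` to `t` in `G`: a nonempty list of pairwise
distinct vertices starting at `s`, ending at `t`, consecutive vertices joined
by edges. (Since all weights are positive, every shortest path is simple, so
it suffices to consider simple paths throughout.) -/
def IsPath (G : WDigraph V) (s t : V) (p : List V) : Prop :=
  List.Chain' G.E p ∧ p.head? = some s ∧ p.getLast? = some t ∧ p.Nodup

/-- The total weight of a list of vertices (sum of the weights of consecutive pairs). -/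
def pw (G : WDigraph V) : List V → ℝ
  | [] => 0
  | [_] => 0
  | a :: b :: r => G.w a b + G.pw (b :: r)

/-- `d(s,t)`: shortest-path distance from `s` to `t`, equal to `⊤` (infinity)
if `t` is unreachable from `s`. -/
noncomputable def dist (G : WDigraph V) (s t : V) : EReal :=
  sInf ((fun p => (G.pw p : EReal)) '' {p | G.IsPath s t p})

/-- The set of shortest `s`-`t` paths in `G`. -/
def SP (G : WDigraph V) (s t : V) : Set (List V) :=
  {p | G.IsPath s t p ∧ (G.pw p : EReal) = G.dist s t}

/-- `σ_{st}`: the number of shortest `s`-`t` paths in `G`. -/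
noncomputable def sigma (G : WDigraph V) (s t : V) : ℕ :=
  (G.SP s t).ncard

/-- `σ_{st}(v)`: the number of shortest `s`-`t` paths in `G` that contain `v`. -/
noncomputable def sigmaV (G : WDigraph V) (s t v : V) : ℕ :=
  {p ∈ G.SP s t | v ∈ p}.ncard

/-- `σ_{st}(v,w)`: the number of shortest `s`-`t` paths in `G` using the edge `(v,w)`. -/
noncomputable def sigmaE (G : WDigraph V) (s t v w : V) : ℕ :=
  {p ∈ G.SP s t | [v, w] <:+: p}.ncard

/-- `P_s(t)`: the set of predecessors of `t` with respect to source `s`: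
nodes `y` with `(y,t) ∈ E` and `d(s,y) + ω(y,t) = d(s,t) < ∞`. -/
def pred (G : WDigraph V) (s t : V) : Set V :=
  {y | G.E y t ∧ G.dist s y + (G.w y t : EReal) = G.dist s t ∧ G.dist s t < ⊤}

/-- `δ_{s•}(v)`: Brandes's one-sided dependency of `s` on `v`
(a summand is `0` whenever its denominator is `0`, which is automatic since
in Lean division by zero yields zero). -/
noncomputable def delta (G : WDigraph V) (s v : V) : ℝ :=
  ∑ᶠ t ∈ {t : V | t ≠ s ∧ t ≠ v}, (G.sigmaV s t v : ℝ) / (G.sigma s t : ℝ)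

/-- `c_B(v)`: the betweenness centrality of `v`. -/
noncomputable def bc (G : WDigraph V) (v : V) : ℝ :=
  ∑ᶠ s ∈ {s : V | s ≠ v}, G.delta s v

/-- `G'` is obtained from `G` by the incremental update `(u, v, ω'(u,v))`:
either a new edge `(u,v) ∉ E` is inserted with positive weight, or the weight
of the existing edge `(u,v)` is decreased; all other edges and weights are
unchanged. (Positivity of all weights is part of the `WDigraph` structure.) -/
structure IsUpdate (G G' : WDigraph V) (u v : V) : Prop where
  /-- the updated edge is present in `G'` -/
  edge' : G'.E u v
  /-- `E' = E ∪ {(u,v)}` -/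
  edge_iff : ∀ a b, G'.E a b ↔ G.E a b ∨ a = u ∧ b = v
  /-- `ω'` agrees with `ω` on all edges other than `(u,v)` -/
  weight_eq : ∀ a b, ¬(a = u ∧ b = v) → G'.w a b = G.w a b
  /-- either an insertion of a new edge, or a weight decrease of an existing one -/
  insert_or_decrease : ¬ G.E u v ∨ (G.E u v ∧ G'.w u v < G.w u v)

/-- `S(t)`: the affected sources of `t`. -/
def affS (G G' : WDigraph V) (t : V) : Set V :=
  {s | G.dist s t > G'.dist s t ∨ G.sigma s t ≠ G'.sigma s t}

/-- `T(s)`: the affected targets of `s`. -/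
def affT (G G' : WDigraph V) (s : V) : Set V :=
  {t | G.dist s t > G'.dist s t ∨ G.sigma s t ≠ G'.sigma s t}

/-- `Δ_{s•}(v) = Σ_{t ∈ T(s), t ≠ v} σ_{st}(v)/σ_{st}`, computed in `G`
(`0`-convention for zero denominators). -/
noncomputable def Delta (G G' : WDigraph V) (s v : V) : ℝ :=
  ∑ᶠ t ∈ {t : V | t ∈ affT G G' s ∧ t ≠ v}, (G.sigmaV s t v : ℝ) / (G.sigma s t : ℝ)

/-- `Δ'_{s•}(v) = Σ_{t ∈ T(s), t ≠ v} σ'_{st}(v)/σ'_{st}`, computed in `G'`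
(`0`-convention for zero denominators). -/
noncomputable def Delta' (G G' : WDigraph V) (s v : V) : ℝ :=
  ∑ᶠ t ∈ {t : V | t ∈ affT G G' s ∧ t ≠ v}, (G'.sigmaV s t v : ℝ) / (G'.sigma s t : ℝ)

end WDigraph

theorem List.exists_eq_append_cons_append_cons_of_not_nodup {α : Type*} {l : List α}
    (h : ¬ l.Nodup) : ∃ (a : List α) (y : α) (b c : List α), l = a ++ y :: b ++ y :: c := by
  induction l with
  | nil => simp at h
  | cons z r ih =>
    by_cases hz : z ∈ r
    · obtain ⟨b, c, rfl⟩ := List.append_of_mem hz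
      exact ⟨[], z, b, c, rfl⟩
    · obtain ⟨a, y, b, c, rfl⟩ := ih fun hr => h (List.nodup_cons.2 ⟨hz, hr⟩)
      exact ⟨z :: a, y, b, c, rfl⟩

theorem List.Nodup.append_cons_inj {α : Type*} {a a' b b' : List α} {y : α}
    (hnd : (a ++ y :: b).Nodup) (h : a ++ y :: b = a' ++ y :: b') : a = a' ∧ b = b' := by
  have hy : y ∉ a ++ b := (List.nodup_cons.1 (List.nodup_middle.1 hnd)).1
  rw [List.mem_append, not_or] at hy
  obtain ⟨ha, -, hb⟩ := (List.append_cons_inj_of_notMem hy.1 hy.2).1 h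
  exact ⟨ha, hb⟩

theorem finsum_mem_eq_indicator_add_sdiff_singleton {α M : Type*} [AddCommMonoid M]
    (f : α → M) {T : Set α} (hT : T.Finite) (a : α) :
    ∑ᶠ t ∈ T, f t = T.indicator f a + ∑ᶠ t ∈ T \ {a}, f t := by
  by_cases ha : a ∈ T
  · rw [Set.indicator_of_mem ha, ← finsum_mem_insert (a := a) (s := T \ {a}) f (by simp) hT.sdiff,
      Set.insert_sdiff_singleton, Set.insert_eq_of_mem ha]
  · rw [Set.indicator_of_notMem ha, zero_add, Set.sdiff_singleton_eq_self ha]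

namespace WDigraph

variable {V : Type*} {G : WDigraph V}

@[simp]
theorem pw_cons_cons (a b : V) (r : List V) : G.pw (a :: b :: r) = G.w a b + G.pw (b :: r) :=
  rfl

theorem pw_append_cons (a : List V) (y : V) (b : List V) :
    G.pw (a ++ y :: b) = G.pw (a ++ [y]) + G.pw (y :: b) := by
  induction a with
  | nil => simp [pw]
  | cons z a ih =>
    cases a with
    | nil => simp [pw]
    | cons z' a =>
      simp only [List.cons_append, pw_cons_cons] at ih ⊢
      rw [ih, add_assoc]

theorem pw_nonneg {p : List V} (hp : p.IsChain G.E) : 0 ≤ G.pw p := by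
  induction p with
  | nil => simp [pw]
  | cons a q ih =>
    cases q with
    | nil => simp [pw]
    | cons b r =>
      obtain ⟨hab, hr⟩ := List.isChain_cons_cons.1 hp
      simpa using add_nonneg (G.pos a b hab).le (ih hr)

theorem pw_pos {p : List V} (hp : p.IsChain G.E) (hlen : 2 ≤ p.length) : 0 < G.pw p := by
  match p, hlen with
  | a :: b :: r, _ =>
    obtain ⟨hab, hr⟩ := List.isChain_cons_cons.1 hp
    simpa using add_pos_of_pos_of_nonneg (G.pos a b hab) (pw_nonneg hr)

def IsWalk (G : WDigraph V) (s t : V) (p : List V) : Prop :=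
  p.IsChain G.E ∧ p.head? = some s ∧ p.getLast? = some t

theorem isPath_iff {s t : V} {p : List V} : G.IsPath s t p ↔ G.IsWalk s t p ∧ p.Nodup :=
  ⟨fun ⟨hc, hs, ht, hnd⟩ => ⟨⟨hc, hs, ht⟩, hnd⟩, fun ⟨⟨hc, hs, ht⟩, hnd⟩ => ⟨hc, hs, ht, hnd⟩⟩

theorem isWalk_append_cons {s t y : V} {a b : List V} :
    G.IsWalk s t (a ++ y :: b) ↔ G.IsWalk s y (a ++ [y]) ∧ G.IsWalk y t (y :: b) := by
  simp [IsWalk, List.isChain_append, List.head?_append, List.getLast?_append]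
  tauto

theorem IsWalk.exists_shorter {s t : V} {p : List V} (hp : G.IsWalk s t p) (hnd : ¬ p.Nodup) :
    ∃ p', G.IsWalk s t p' ∧ p'.length < p.length ∧ G.pw p' < G.pw p := by
  obtain ⟨a, y, b, c, rfl⟩ := List.exists_eq_append_cons_append_cons_of_not_nodup hnd
  have hsplit : a ++ y :: b ++ y :: c = a ++ y :: (b ++ y :: c) := by simp
  rw [hsplit, isWalk_append_cons, ← List.cons_append, isWalk_append_cons (a := y :: b)] at hp
  obtain ⟨hay, hloop, hyc⟩ := hp
  refine ⟨a ++ y :: c, isWalk_append_cons.2 ⟨hay, hyc⟩, by simp, ?_⟩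
  have hloop_pos : 0 < G.pw (y :: b ++ [y]) := pw_pos hloop.1 (by simp)
  rw [hsplit, pw_append_cons a y (b ++ y :: c), ← List.cons_append, pw_append_cons (y :: b) y c,
    pw_append_cons a y c]
  linarith

theorem dist_le_pw {s t : V} {p : List V} (hp : G.IsWalk s t p) : G.dist s t ≤ G.pw p := by
  induction hn : p.length using Nat.strong_induction_on generalizing p with
  | _ n ih =>
    by_cases hnd : p.Nodup
    · exact sInf_le ⟨p, isPath_iff.2 ⟨hp, hnd⟩, rfl⟩
    · obtain ⟨p', hp', hlen, hpw⟩ := hp.exists_shorter hnd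
      exact (ih _ (hn ▸ hlen) hp' rfl).trans (EReal.coe_le_coe_iff.2 hpw.le)

theorem dist_lt_pw {s t : V} {p : List V} (hp : G.IsWalk s t p) (hnd : ¬ p.Nodup) :
    G.dist s t < G.pw p := by
  obtain ⟨p', hp', -, hpw⟩ := hp.exists_shorter hnd
  exact (dist_le_pw hp').trans_lt (EReal.coe_lt_coe_iff.2 hpw)

theorem dist_lt_top_of_mem_SP {s t : V} {p : List V} (hp : p ∈ G.SP s t) : G.dist s t < ⊤ :=
  hp.2 ▸ EReal.coe_lt_top _

theorem exists_eq_append_of_mem_SP {s t : V} {p : List V} (hp : p ∈ G.SP s t) :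
    ∃ a, p = a ++ [t] :=
  List.getLast?_eq_some_iff.1 hp.1.2.2.1

/-- The continuations `b` of a shortest `s`-`y` path `a ++ [y]` such that `a ++ y :: b` is a
shortest `s`-`t` path (see `append_cons_mem_SP_iff`). -/
def SPTail (G : WDigraph V) (s t y : V) : Set (List V) :=
  {b | G.IsWalk y t (y :: b) ∧ G.dist s y + (G.pw (y :: b) : EReal) = G.dist s t}

theorem mem_pred_iff {s x w : V} :
    x ∈ G.pred s w ↔ [w] ∈ G.SPTail s w x ∧ G.dist s w < ⊤ := by
  simp [pred, SPTail, IsWalk, pw, and_assoc]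

theorem sigmaV_self (s t : V) : G.sigmaV s t t = G.sigma s t := by
  rw [sigmaV, sigma, Set.sep_eq_self_iff_mem_true.2 fun p hp => List.mem_of_getLast? hp.1.2.2.1]

/-- `Δ'_{s•}` is `G'.dependency s (affT G G' s)`, and Brandes's `δ_{s•}` is
`G.dependency s {s}ᶜ`. -/
noncomputable def dependency (G : WDigraph V) (s : V) (T : Set V) (x : V) : ℝ :=
  ∑ᶠ t ∈ T \ {x}, (G.sigmaV s t x : ℝ) / G.sigma s t

section

variable [Finite V]

theorem setOf_isPath_finite (G : WDigraph V) (s t : V) : {p | G.IsPath s t p}.Finite :=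
  have := Fintype.ofFinite V
  (List.finite_length_le V (Fintype.card V)).subset fun _ hp => hp.2.2.2.length_le_card

theorem SP_finite (G : WDigraph V) (s t : V) : (G.SP s t).Finite :=
  (G.setOf_isPath_finite s t).subset fun _ hp => hp.1

theorem exists_mem_SP {s t : V} (h : G.dist s t < ⊤) : ∃ p, p ∈ G.SP s t := by
  have hne : ((fun p => (G.pw p : EReal)) '' {p | G.IsPath s t p}).Nonempty := by
    by_contra hempty
    rw [Set.not_nonempty_iff_eq_empty] at hempty
    exact h.ne (by rw [dist, hempty, sInf_empty])
  obtain ⟨p, hp, hpw⟩ := hne.csInf_mem ((G.setOf_isPath_finite s t).image _)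
  exact ⟨p, hp, hpw⟩

theorem sigma_ne_zero {s t : V} (h : G.dist s t < ⊤) : G.sigma s t ≠ 0 := by
  obtain ⟨p, hp⟩ := exists_mem_SP h
  exact Set.ncard_ne_zero_of_mem hp (G.SP_finite s t)

theorem append_cons_mem_SP_iff {s t y : V} {a b : List V} :
    a ++ y :: b ∈ G.SP s t ↔ a ++ [y] ∈ G.SP s y ∧ b ∈ G.SPTail s t y := by
  constructor
  · rintro ⟨hpath, hpw⟩
    obtain ⟨hwalk, hnd⟩ := isPath_iff.1 hpath
    obtain ⟨hay, hyb⟩ := isWalk_append_cons.1 hwalk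
    have hay_path : G.IsPath s y (a ++ [y]) :=
      isPath_iff.2 ⟨hay, hnd.sublist (by simp)⟩
    obtain ⟨q, hq⟩ := exists_mem_SP ((dist_le_pw hay).trans_lt (EReal.coe_lt_top _))
    obtain ⟨a', rfl⟩ := exists_eq_append_of_mem_SP hq
    -- rerouting `a ++ y :: b` through the shortest path `a' ++ [y]` cannot make it shorter
    have hreroute : G.pw (a ++ [y]) ≤ G.pw (a' ++ [y]) := by
      have := hpw ▸ dist_le_pw (isWalk_append_cons.2 ⟨(isPath_iff.1 hq.1).1, hyb⟩)
      rw [pw_append_cons, pw_append_cons a'] at this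
      linarith [EReal.coe_le_coe_iff.1 this]
    have hshort : G.pw (a' ++ [y]) ≤ G.pw (a ++ [y]) :=
      EReal.coe_le_coe_iff.1 (hq.2 ▸ dist_le_pw hay)
    have hdist : (G.pw (a ++ [y]) : EReal) = G.dist s y := by
      rw [← hq.2, le_antisymm hreroute hshort]
    refine ⟨⟨hay_path, hdist⟩, hyb, ?_⟩
    rw [← hpw, ← hdist, pw_append_cons a y b, EReal.coe_add]
  · rintro ⟨⟨hay, hdist⟩, hyb, hdist'⟩
    have hpw : (G.pw (a ++ y :: b) : EReal) = G.dist s t := by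
      rw [pw_append_cons a y b, EReal.coe_add, hdist, hdist']
    have hwalk := isWalk_append_cons.2 ⟨(isPath_iff.1 hay).1, hyb⟩
    refine ⟨isPath_iff.2 ⟨hwalk, ?_⟩, hpw⟩
    by_contra hnd
    exact (dist_lt_pw hwalk hnd).ne' hpw

theorem dist_lt_dist_of_mem_pred {s x w : V} (hx : x ∈ G.pred s w) :
    G.dist s x < G.dist s w := by
  obtain ⟨hE, hd, hw⟩ := hx
  have hx_top : G.dist s x < ⊤ := by
    refine lt_top_iff_ne_top.2 fun h => hw.ne ?_
    rw [← hd, h, EReal.top_add_coe]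
  obtain ⟨q, hq⟩ := exists_mem_SP hx_top
  rw [← hd, ← hq.2, ← EReal.coe_add, EReal.coe_lt_coe_iff]
  linarith [G.pos x w hE]

theorem notMem_of_mem_pred {s x w : V} (hx : x ∈ G.pred s w) {q : List V}
    (hq : q ∈ G.SP s x) : w ∉ q := by
  intro hwq
  obtain ⟨a, b, rfl⟩ := List.append_of_mem hwq
  obtain ⟨-, hwalk, hd⟩ := append_cons_mem_SP_iff.1 hq
  have : G.dist s w ≤ G.dist s x :=
    hd ▸ le_add_of_nonneg_right (EReal.coe_nonneg.2 (pw_nonneg hwalk.1))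
  exact (dist_lt_dist_of_mem_pred hx).not_ge this

theorem mem_pred_of_infix {s t x w : V} {p : List V} (hp : p ∈ G.SP s t)
    (h : [x, w] <:+: p) : x ∈ G.pred s w := by
  obtain ⟨a, c, rfl⟩ := h
  rw [show a ++ [x, w] ++ c = a ++ [x] ++ w :: c by simp, append_cons_mem_SP_iff] at hp
  have hw := dist_lt_top_of_mem_SP hp.1
  rw [show a ++ [x] ++ [w] = a ++ x :: [w] by simp, append_cons_mem_SP_iff] at hp
  exact mem_pred_iff.2 ⟨hp.1.2, hw⟩

theorem append_cons_cons_mem_SP_iff {s t x w : V} (hx : x ∈ G.pred s w)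
    {a b : List V} : a ++ x :: w :: b ∈ G.SP s t ↔ a ++ [x] ∈ G.SP s x ∧ b ∈ G.SPTail s t w := by
  rw [show a ++ x :: w :: b = a ++ [x] ++ w :: b by simp, append_cons_mem_SP_iff,
    show a ++ [x] ++ [w] = a ++ x :: [w] by simp, append_cons_mem_SP_iff]
  simp [(mem_pred_iff.1 hx).1]

theorem sigmaV_eq_sigma_mul (s t w : V) :
    G.sigmaV s t w = G.sigma s w * (G.SPTail s t w).ncard := by
  rw [sigma, ← Set.ncard_prod, sigmaV]
  symm
  refine Set.ncard_congr (fun qb _ => qb.1 ++ qb.2) ?_ ?_ ?_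
  · rintro ⟨q, b⟩ ⟨hq, hb⟩
    obtain ⟨a, rfl⟩ := exists_eq_append_of_mem_SP hq
    simpa using append_cons_mem_SP_iff.2 ⟨hq, hb⟩
  · rintro ⟨q, b⟩ ⟨q', b'⟩ ⟨hq, hb⟩ ⟨hq', -⟩ h
    obtain ⟨a, rfl⟩ := exists_eq_append_of_mem_SP hq
    obtain ⟨a', rfl⟩ := exists_eq_append_of_mem_SP hq'
    simp only [List.append_assoc, List.singleton_append] at h
    obtain ⟨rfl, rfl⟩ := (append_cons_mem_SP_iff.2 ⟨hq, hb⟩).1.2.2.2.append_cons_inj h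
    rfl
  · rintro p ⟨hp, hwp⟩
    obtain ⟨a, b, rfl⟩ := List.append_of_mem hwp
    exact ⟨(a ++ [w], b), append_cons_mem_SP_iff.1 hp, by simp⟩

theorem sigmaE_eq_sigma_mul {s x w : V} (hx : x ∈ G.pred s w) (t : V) :
    G.sigmaE s t x w = G.sigma s x * (G.SPTail s t w).ncard := by
  rw [sigma, ← Set.ncard_prod, sigmaE]
  symm
  refine Set.ncard_congr (fun qb _ => qb.1 ++ w :: qb.2) ?_ ?_ ?_
  · rintro ⟨q, b⟩ ⟨hq, hb⟩
    obtain ⟨a, rfl⟩ := exists_eq_append_of_mem_SP hq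
    exact ⟨by simpa using (append_cons_cons_mem_SP_iff hx).2 ⟨hq, hb⟩, a, b, by simp⟩
  · rintro ⟨q, b⟩ ⟨q', b'⟩ ⟨hq, hb⟩ ⟨hq', -⟩ h
    obtain ⟨a, rfl⟩ := exists_eq_append_of_mem_SP hq
    obtain ⟨a', rfl⟩ := exists_eq_append_of_mem_SP hq'
    simp only [List.append_assoc, List.singleton_append] at h
    obtain ⟨rfl, htail⟩ :=
      ((append_cons_cons_mem_SP_iff hx).2 ⟨hq, hb⟩).1.2.2.2.append_cons_inj h
    rw [show b = b' from (List.cons_inj_right w).1 htail]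
  · rintro p ⟨hp, a, c, rfl⟩
    rw [show a ++ [x, w] ++ c = a ++ x :: w :: c by simp] at hp ⊢
    exact ⟨(a ++ [x], c), (append_cons_cons_mem_SP_iff hx).1 hp, by simp⟩

theorem sigmaE_eq_zero_of_notMem_pred {s x w : V} (hx : x ∉ G.pred s w) (t : V) :
    G.sigmaE s t x w = 0 := by
  rw [sigmaE, Set.ncard_eq_zero ((G.SP_finite s t).subset (Set.sep_subset _ _))]
  exact Set.eq_empty_of_forall_notMem fun p ⟨hp, hinf⟩ => hx (mem_pred_of_infix hp hinf)

theorem sigmaV_eq_finsum_sigmaE {s t x : V} (hxt : x ≠ t) :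
    G.sigmaV s t x = ∑ᶠ w, G.sigmaE s t x w := by
  unfold sigmaV sigmaE
  rw [← Set.ncard_iUnion_of_finite (fun w => (G.SP_finite s t).subset (Set.sep_subset _ _))]
  · congr 1
    ext p
    simp only [Set.mem_iUnion]
    constructor
    · rintro ⟨hp, hxp⟩
      obtain ⟨a, b, rfl⟩ := List.append_of_mem hxp
      cases b with
      | nil => exact absurd (by simpa using hp.1.2.2.1) hxt
      | cons w c => exact ⟨w, hp, a, c, by simp⟩
    · rintro ⟨w, hp, hinf⟩
      exact ⟨hp, hinf.subset (by simp)⟩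
  · intro w w' hww
    refine Set.disjoint_left.2 ?_
    rintro p ⟨hp, a, c, rfl⟩ ⟨-, a', c', h⟩
    simp only [List.append_assoc, List.cons_append, List.nil_append] at h hp
    have := (hp.1.2.2.2.append_cons_inj h.symm).2
    exact hww (List.cons.inj this).1

theorem sigmaV_eq_zero_of_mem_pred {s x w : V} (hx : x ∈ G.pred s w) :
    G.sigmaV s x w = 0 := by
  rw [sigmaV, Set.ncard_eq_zero ((G.SP_finite s x).subset (Set.sep_subset _ _))]
  exact Set.eq_empty_of_forall_notMem fun q ⟨hq, hwq⟩ => notMem_of_mem_pred hx hq hwq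

theorem sigmaE_eq_div_mul_sigmaV {s x w : V} (hx : x ∈ G.pred s w) (t : V) :
    (G.sigmaE s t x w : ℝ) = G.sigma s x / G.sigma s w * G.sigmaV s t w := by
  have hw : (G.sigma s w : ℝ) ≠ 0 := Nat.cast_ne_zero.2 (sigma_ne_zero hx.2.2)
  rw [sigmaE_eq_sigma_mul hx, sigmaV_eq_sigma_mul]
  push_cast
  field_simp

theorem sigmaV_div_sigma_eq_finsum_pred {s t x : V} (hxt : x ≠ t) :
    (G.sigmaV s t x : ℝ) / G.sigma s t =
      ∑ᶠ w ∈ {w | x ∈ G.pred s w},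
        (G.sigma s x : ℝ) / G.sigma s w * (G.sigmaV s t w / G.sigma s t) := by
  rw [sigmaV_eq_finsum_sigmaE hxt, Nat.cast_finsum, div_eq_mul_inv,
    finsum_mul, finsum_mem_def]
  refine finsum_congr fun w => ?_
  by_cases hx : x ∈ G.pred s w
  · rw [Set.indicator_of_mem (show w ∈ {w | x ∈ G.pred s w} from hx),
      sigmaE_eq_div_mul_sigmaV hx, mul_assoc, div_eq_mul_inv (G.sigmaV s t w : ℝ)]
  · rw [Set.indicator_of_notMem (show w ∉ {w | x ∈ G.pred s w} from hx),
      sigmaE_eq_zero_of_notMem_pred hx, Nat.cast_zero, zero_mul]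

theorem finsum_mem_sigmaV_div_sigma {s w : V} (hw : G.dist s w < ⊤) (T : Set V) :
    ∑ᶠ t ∈ T, (G.sigmaV s t w : ℝ) / G.sigma s t = T.indicator 1 w + G.dependency s T w := by
  rw [finsum_mem_eq_indicator_add_sdiff_singleton _ (Set.toFinite T) w, dependency]
  congr 1
  by_cases hwT : w ∈ T
  · simp [hwT, sigmaV_self, sigma_ne_zero hw]
  · simp [hwT]

theorem dependency_eq_finsum_pred (s x : V) (T : Set V) :
    G.dependency s T x =
      (∑ᶠ w ∈ {w | x ∈ G.pred s w} ∩ T,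
        (G.sigma s x : ℝ) / G.sigma s w * (1 + G.dependency s T w)) +
      ∑ᶠ w ∈ {w | x ∈ G.pred s w} \ T,
        (G.sigma s x : ℝ) / G.sigma s w * G.dependency s T w := by
  have hinner : ∀ w ∈ {w | x ∈ G.pred s w}, ∑ᶠ t ∈ T \ {x}, (G.sigmaV s t w : ℝ) / G.sigma s t =
      T.indicator 1 w + G.dependency s T w := by
    intro w hx
    rw [← finsum_mem_sigmaV_div_sigma hx.2.2 T,
      finsum_mem_eq_indicator_add_sdiff_singleton _ (Set.toFinite T) x]
    simp [sigmaV_eq_zero_of_mem_pred hx]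
  calc G.dependency s T x
      = ∑ᶠ t ∈ T \ {x}, ∑ᶠ w ∈ {w | x ∈ G.pred s w},
          (G.sigma s x : ℝ) / G.sigma s w * (G.sigmaV s t w / G.sigma s t) :=
        finsum_mem_congr rfl fun t ht => sigmaV_div_sigma_eq_finsum_pred (Ne.symm ht.2)
    _ = ∑ᶠ w ∈ {w | x ∈ G.pred s w}, (G.sigma s x : ℝ) / G.sigma s w *
          ∑ᶠ t ∈ T \ {x}, (G.sigmaV s t w : ℝ) / G.sigma s t := by
        rw [finsum_mem_comm _ (Set.toFinite _) (Set.toFinite _)]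
        simp only [mul_finsum_mem]
    _ = ∑ᶠ w ∈ {w | x ∈ G.pred s w},
          (G.sigma s x : ℝ) / G.sigma s w * (T.indicator 1 w + G.dependency s T w) :=
        finsum_mem_congr rfl fun w hw => by rw [hinner w hw]
    _ = _ := by
        rw [← finsum_mem_inter_add_sdiff T (Set.toFinite _)]
        congr 1 <;> refine finsum_mem_congr rfl fun w hw => ?_
        · rw [Set.indicator_of_mem hw.2, Pi.one_apply]
        · rw [Set.indicator_of_notMem hw.2, zero_add]

end

variable [Fintype V] [DecidableEq V]

theorem Delta'_recursion_general (G G' : WDigraph V) (s x : V) :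
    Delta' G G' s x =
      (∑ᶠ w ∈ {w : V | x ∈ G'.pred s w ∧ w ∈ affT G G' s},
        (G'.sigma s x : ℝ) / (G'.sigma s w : ℝ) * (1 + Delta' G G' s w)) +
      ∑ᶠ w ∈ {w : V | x ∈ G'.pred s w ∧ w ∉ affT G G' s},
        (G'.sigma s x : ℝ) / (G'.sigma s w : ℝ) * Delta' G G' s w :=
  G'.dependency_eq_finsum_pred s x (affT G G' s)

/-- For every `s, x ∈ V` with `x ≠ s`:
`Δ'_{s•}(x) = Σ_{w : x ∈ P'_s(w), w ∈ T(s)} (σ'_{sx}/σ'_{sw})·(1 + Δ'_{s•}(w))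
            + Σ_{w : x ∈ P'_s(w), w ∉ T(s)} (σ'_{sx}/σ'_{sw})·Δ'_{s•}(w)`. -/
theorem Delta'_recursion (G G' : WDigraph V) (u v : V)
    (h : IsUpdate G G' u v) (s x : V) (hxs : x ≠ s) :
    Delta' G G' s x =
      (∑ᶠ w ∈ {w : V | x ∈ G'.pred s w ∧ w ∈ affT G G' s},
        (G'.sigma s x : ℝ) / (G'.sigma s w : ℝ) * (1 + Delta' G G' s w)) +
      ∑ᶠ w ∈ {w : V | x ∈ G'.pred s w ∧ w ∉ affT G G' s},
        (G'.sigma s x : ℝ) / (G'.sigma s w : ℝ) * Delta' G G' s w :=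
  Delta'_recursion_general G G' s x

end WDigraph
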